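/- Let φ = f + g with f : ℝⁿ → ℝ differentiable and g : ℝⁿ → ℝ ∪ {∞} proper, lsc, convex. Suppose xᵏ = prox_{γₖ g}(xᵏ⁻¹ − γₖ∇f(xᵏ⁻¹)) with γₖ > 0, and let ℓₖ = ⟨∇f(xᵏ) − ∇f(xᵏ⁻¹), xᵏ − xᵏ⁻¹⟩/‖xᵏ − xᵏ⁻¹‖². Then φ(xᵏ⁻¹) − φ(xᵏ) ≥ ((1 − γₖℓₖ)/γₖ)‖xᵏ − xᵏ⁻¹‖². -/

import Mathlib

/-!
The prox inequality, compared against the points `t • xᵏ⁻¹ + (1 - t) • xᵏ` and combined with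
convexity of `g`, yields after dividing by `t` and letting `t → 0⁺` that
`(xᵏ⁻¹ - xᵏ)/γₖ - ∇f(xᵏ⁻¹)` is a subgradient of `g` at `xᵏ`. Adding the gradient inequality
of `f` at `xᵏ` and using `ℓₖ ‖xᵏ - xᵏ⁻¹‖² = ⟪∇f(xᵏ) - ∇f(xᵏ⁻¹), xᵏ - xᵏ⁻¹⟫` gives the claim.
-/

open scoped RealInnerProductSpace

noncomputable section

def EProper {n : ℕ} (g : EuclideanSpace ℝ (Fin n) → EReal) : Prop :=
  (∀ x, g x ≠ ⊥) ∧ ∃ x, g x ≠ ⊤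

def EConvexOn {n : ℕ} (g : EuclideanSpace ℝ (Fin n) → EReal) : Prop :=
  ∀ x y : EuclideanSpace ℝ (Fin n), ∀ a b : ℝ, 0 ≤ a → 0 ≤ b → a + b = 1 →
    g (a • x + b • y) ≤ (a : EReal) * g x + (b : EReal) * g y

def IsProx {n : ℕ} (g : EuclideanSpace ℝ (Fin n) → EReal) (γ : ℝ)
    (y p : EuclideanSpace ℝ (Fin n)) : Prop :=
  ∀ z, g p + ((1 / (2 * γ) * ‖p - y‖ ^ 2 : ℝ) : EReal)
      ≤ g z + ((1 / (2 * γ) * ‖z - y‖ ^ 2 : ℝ) : EReal)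

open Set Filter Topology

theorem ConvexOn.add_fderiv_sub_le {E : Type*} [NormedAddCommGroup E] [NormedSpace ℝ E]
    {s : Set E} {f : E → ℝ} {x y : E} (hfc : ConvexOn ℝ s f) (hx : x ∈ s) (hy : y ∈ s)
    (hf : DifferentiableAt ℝ f x) : f x + fderiv ℝ f x (y - x) ≤ f y := by
  have hline : HasDerivAt (AffineMap.lineMap x y : ℝ → E) (y - x) 0 := by
    simpa using AffineMap.hasDerivAt_lineMap (a := x) (b := y) (x := 0)
  have hderiv : HasDerivAt (f ∘ (AffineMap.lineMap x y : ℝ → E)) (fderiv ℝ f x (y - x)) 0 := by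
    refine HasFDerivAt.comp_hasDerivAt (0 : ℝ) ?_ hline
    simpa using hf.hasFDerivAt
  have := (hfc.comp_affineMap (AffineMap.lineMap x y)).le_slope_of_hasDerivAt
    (by simpa using hx) (by simpa using hy) zero_lt_one hderiv
  simp only [slope_def_field, Function.comp_apply, AffineMap.lineMap_apply_zero,
    AffineMap.lineMap_apply_one, sub_zero, div_one] at this
  linarith

theorem ConvexOn.add_inner_gradient_sub_le {E : Type*} [NormedAddCommGroup E]
    [InnerProductSpace ℝ E] [CompleteSpace E] {s : Set E} {f : E → ℝ} {x y : E}
    (hfc : ConvexOn ℝ s f) (hx : x ∈ s) (hy : y ∈ s) (hf : DifferentiableAt ℝ f x) :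
    f x + ⟪gradient f x, y - x⟫ ≤ f y := by
  simpa only [inner_gradient_left] using hfc.add_fderiv_sub_le hx hy hf

theorem le_of_forall_le_add_mul {a b c : ℝ} (h : ∀ t, 0 < t → t ≤ 1 → a ≤ b + t * c) :
    a ≤ b := by
  have hlim : Tendsto (fun t : ℝ => b + t * c) (𝓝[>] 0) (𝓝 b) := by
    refine Tendsto.mono_left ?_ nhdsWithin_le_nhds
    exact (by fun_prop : Continuous fun t : ℝ => b + t * c).tendsto' 0 b (by simp)
  refine ge_of_tendsto hlim ?_
  filter_upwards [Ioc_mem_nhdsGT zero_lt_one] with t ht using h t ht.1 ht.2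

section Prox

variable {n : ℕ} {g : EuclideanSpace ℝ (Fin n) → EReal} {γ : ℝ}
  {y p : EuclideanSpace ℝ (Fin n)}

theorem IsProx.ne_top (hg : EProper g) (h : IsProx g γ y p) : g p ≠ ⊤ := by
  obtain ⟨z, hz⟩ := hg.2
  intro hp
  have := h z
  rw [hp, EReal.top_add_coe, top_le_iff, ← EReal.coe_toReal hz (hg.1 z), ← EReal.coe_add] at this
  exact EReal.coe_ne_top _ this

theorem IsProx.add_inner_le (hgc : EConvexOn g) (h : IsProx g γ y p) (hγ : 0 < γ)
    {z : EuclideanSpace ℝ (Fin n)} {a b : ℝ} (hp : g p = b) (hz : g z = a) :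
    b + ⟪γ⁻¹ • (y - p), z - p⟫ ≤ a := by
  set c := 1 / (2 * γ) with hc
  refine le_of_forall_le_add_mul (c := c * ‖z - p‖ ^ 2) fun t ht0 ht1 => ?_
  have hconv := hgc z p t (1 - t) ht0.le (by linarith) (by ring)
  rw [hz, hp] at hconv
  have hprox := (h (t • z + (1 - t) • p)).trans (add_le_add_left hconv _)
  rw [hp] at hprox
  norm_cast at hprox
  have hzt : t • z + (1 - t) • p - y = (p - y) + t • (z - p) := by module
  rw [hzt, norm_add_sq_real, real_inner_smul_right, norm_smul, Real.norm_eq_abs,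
    abs_of_pos ht0] at hprox
  have hdiff : 0 ≤ t * (a - b + 2 * c * ⟪p - y, z - p⟫ + t * c * ‖z - p‖ ^ 2) := by
    linear_combination hprox
  have hinner : ⟪γ⁻¹ • (y - p), z - p⟫ = -(2 * c) * ⟪p - y, z - p⟫ := by
    rw [real_inner_smul_left, ← neg_sub p y, inner_neg_left, hc]
    field_simp
  rw [hinner]
  linear_combination nonneg_of_mul_nonneg_right hdiff ht0

end Prox

theorem real_inner_div_norm_sq_mul_norm_sq {E : Type*} [NormedAddCommGroup E]
    [InnerProductSpace ℝ E] (v d : E) : ⟪v, d⟫ / ‖d‖ ^ 2 * ‖d‖ ^ 2 = ⟪v, d⟫ := by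
  rcases eq_or_ne d 0 with rfl | hd
  · simp
  · exact div_mul_cancel₀ _ (by positivity)

theorem stmt3_general {n : ℕ} (f : EuclideanSpace ℝ (Fin n) → ℝ)
    (hf : Differentiable ℝ f) (hfc : ConvexOn ℝ Set.univ f)
    (g : EuclideanSpace ℝ (Fin n) → EReal)
    (hgp : EProper g) (hgc : EConvexOn g)
    (φ : EuclideanSpace ℝ (Fin n) → EReal)
    (hφ : φ = fun z => (f z : EReal) + g z)
    (γk : ℝ) (hγk : 0 < γk)
    (xkm1 xk : EuclideanSpace ℝ (Fin n))
    (hprox : IsProx g γk (xkm1 - γk • gradient f xkm1) xk)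
    (ℓk : ℝ)
    (hℓk : ℓk = ⟪gradient f xk - gradient f xkm1, xk - xkm1⟫ / ‖xk - xkm1‖ ^ 2) :
    φ xk + (((1 - γk * ℓk) / γk * ‖xk - xkm1‖ ^ 2 : ℝ) : EReal) ≤ φ xkm1 := by
  subst hφ
  obtain ⟨b, hb⟩ : ∃ b : ℝ, g xk = b :=
    ⟨_, (EReal.coe_toReal (hprox.ne_top hgp) (hgp.1 xk)).symm⟩
  rcases eq_or_ne (g xkm1) ⊤ with hm | hm
  · simp [hm]
  obtain ⟨a, ha⟩ : ∃ a : ℝ, g xkm1 = a := ⟨_, (EReal.coe_toReal hm (hgp.1 xkm1)).symm⟩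
  have hg_subgrad := hprox.add_inner_le hgc hγk hb ha
  have hf_grad := hfc.add_inner_gradient_sub_le (mem_univ xk) (mem_univ xkm1) (hf xk)
  have hℓ : ℓk * ‖xk - xkm1‖ ^ 2 = ⟪gradient f xk - gradient f xkm1, xk - xkm1⟫ :=
    hℓk ▸ real_inner_div_norm_sq_mul_norm_sq _ _
  have hγ0 : γk ≠ 0 := hγk.ne'
  have hv : γk⁻¹ • (xkm1 - γk • gradient f xkm1 - xk) =
      γk⁻¹ • (xkm1 - xk) - gradient f xkm1 := by
    rw [sub_right_comm, smul_sub, smul_smul, inv_mul_cancel₀ hγ0, one_smul]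
  rw [hv, inner_sub_left, real_inner_smul_left, real_inner_self_eq_norm_sq] at hg_subgrad
  rw [← neg_sub xkm1 xk, inner_neg_right, inner_sub_left, norm_neg] at hℓ
  simp only [hb, ha]
  norm_cast
  rw [← neg_sub xkm1 xk, norm_neg, sub_div, mul_div_cancel_left₀ _ hγ0, one_div, sub_mul]
  linarith

/-- Sufficient-decrease inequality for a proximal gradient step:
`φ(xᵏ⁻¹) - φ(xᵏ) ≥ ((1 - γₖℓₖ)/γₖ)‖xᵏ - xᵏ⁻¹‖²`, stated additively as
`φ(xᵏ) + ((1 - γₖℓₖ)/γₖ)‖xᵏ - xᵏ⁻¹‖² ≤ φ(xᵏ⁻¹)`. -/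
theorem stmt3 {n : ℕ} (f : EuclideanSpace ℝ (Fin n) → ℝ)
    (hf : Differentiable ℝ f) (hfc : ConvexOn ℝ Set.univ f)
    (g : EuclideanSpace ℝ (Fin n) → EReal)
    (hgp : EProper g) (hglsc : LowerSemicontinuous g) (hgc : EConvexOn g)
    (φ : EuclideanSpace ℝ (Fin n) → EReal)
    (hφ : φ = fun z => (f z : EReal) + g z)
    (γk : ℝ) (hγk : 0 < γk)
    (xkm1 xk : EuclideanSpace ℝ (Fin n))
    (hprox : IsProx g γk (xkm1 - γk • gradient f xkm1) xk)
    (ℓk : ℝ)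
    (hℓk : ℓk = ⟪gradient f xk - gradient f xkm1, xk - xkm1⟫ / ‖xk - xkm1‖ ^ 2) :
    φ xk + (((1 - γk * ℓk) / γk * ‖xk - xkm1‖ ^ 2 : ℝ) : EReal) ≤ φ xkm1 :=
  stmt3_general f hf hfc g hgp hgc φ hφ γk hγk xkm1 xk hprox ℓk hℓk
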